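/- Let X₀ and X₁ be real Banach spaces and let I : X₀ × X₁ → ℝ be a continuous bilinear map such that both induced continuous linear maps X₁ → X₀* (y ↦ I(·, y)) and X₀ → X₁* (x ↦ I(x, ·)) are surjective. Let B₀ ⊆ X₀ and B₁ ⊆ X₁ be linear subspaces, and set A₀ := B₁^⊥ ⊆ X₀ and A₁ := B₀^⊥ ⊆ X₁; assume B₀ ⊆ A₀ and B₁ ⊆ A₁. Then the induced pairing Ī : (A₀ / closure(B₀)) × (A₁ / closure(B₁)) → ℝ, Ī([a], [α]) := I(a, α), is well defined, continuous, and nondegenerate: for every a ∈ A₀ with [a] ≠ 0 there exists α ∈ A₁ with Ī([a], [α]) ≠ 0, and for every α ∈ A₁ with [α] ≠ 0 there exists a ∈ A₀ with Ī([a], [α]) ≠ 0. -/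

import Mathlib

/-
Surjectivity of `X₁ → X₀*` turns the Hahn–Banach separation of a point from the closed subspace
`closure B₀` into the bipolar identity `closure B₀ = (B₀^⊥)^⊥ = A₁^⊥`. So for `a ∈ A₀`,
`[a] = 0` holds exactly when `I (a, α) = 0` for all `α ∈ A₁`: the "if" direction is
nondegeneracy, the "only if" direction makes the pairing well defined. Symmetrically in `X₁`.
-/

noncomputable section

variable {X₀ X₁ : Type*}
  [NormedAddCommGroup X₀] [NormedSpace ℝ X₀]
  [NormedAddCommGroup X₁] [NormedSpace ℝ X₁]

/-- The annihilator in `X₁` of a subset `B ⊆ X₀` for the pairing `I`: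
`B^⊥ = {y ∈ X₁ | I (x, y) = 0 for all x ∈ B}`. -/
def annRight (I : X₀ →L[ℝ] X₁ →L[ℝ] ℝ) (B : Set X₀) : Submodule ℝ X₁ where
  carrier := {y : X₁ | ∀ x ∈ B, I x y = 0}
  add_mem' := by
    intro a b ha hb x hx
    simp [ha x hx, hb x hx]
  zero_mem' := by
    intro x hx
    simp
  smul_mem' := by
    intro c a ha x hx
    simp [ha x hx]

/-- The annihilator in `X₀` of a subset `B ⊆ X₁` for the pairing `I`:
`B^⊥ = {x ∈ X₀ | I (x, y) = 0 for all y ∈ B}`. -/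
def annLeft (I : X₀ →L[ℝ] X₁ →L[ℝ] ℝ) (B : Set X₁) : Submodule ℝ X₀ where
  carrier := {x : X₀ | ∀ y ∈ B, I x y = 0}
  add_mem' := by
    intro a b ha hb y hy
    simp [ha y hy, hb y hy]
  zero_mem' := by
    intro y hy
    simp
  smul_mem' := by
    intro c a ha y hy
    simp [ha y hy]

theorem Submodule.exists_dual_map_eq_zero_ne_zero_of_notMem_closure {E : Type*}
    [NormedAddCommGroup E] [NormedSpace ℝ E] (S : Submodule ℝ E) {x : E}
    (hx : x ∉ closure (S : Set E)) :
    ∃ f : StrongDual ℝ E, (∀ s ∈ S, f s = 0) ∧ f x ≠ 0 := by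
  -- makes `E ⧸ S.topologicalClosure` a normed space, whose dual separates points
  have : IsClosed (S.topologicalClosure : Set E) := S.isClosed_topologicalClosure
  have hne : S.topologicalClosure.mkQ x ≠ 0 := by
    rwa [Ne, Submodule.mkQ_apply, Submodule.Quotient.mk_eq_zero]
  obtain ⟨g, hg⟩ := SeparatingDual.exists_ne_zero (R := ℝ) hne
  refine ⟨g.comp S.topologicalClosure.mkQL, fun s hs => ?_, hg⟩
  simp [(Submodule.Quotient.mk_eq_zero _).2 (S.le_topologicalClosure hs)]

theorem Submodule.mem_topologicalClosure_comap_subtype_iff {R E : Type*} [Ring R]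
    [TopologicalSpace R] [TopologicalSpace E] [AddCommGroup E] [Module R E]
    [IsTopologicalAddGroup E] [ContinuousSMul R E] {A B : Submodule R E} (hBA : B ≤ A) (a : A) :
    a ∈ (B.comap A.subtype).topologicalClosure ↔ (a : E) ∈ closure (B : Set E) := by
  have himage : Subtype.val '' ((B.comap A.subtype : Submodule R A) : Set A) = B := by
    rw [← A.coe_subtype, ← Submodule.map_coe, Submodule.map_comap_subtype, inf_eq_right.2 hBA]
  rw [← SetLike.mem_coe, Submodule.topologicalClosure_coe, closure_subtype, himage]

namespace Submodule

variable {R M N P : Type*} [CommRing R] [AddCommGroup M] [Module R M] [AddCommGroup N]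
  [Module R N] [AddCommGroup P] [Module R P] (p : Submodule R M) (q : Submodule R N)

def liftQ₂ (f : M →ₗ[R] N →ₗ[R] P) (hp : ∀ m ∈ p, ∀ n, f m n = 0)
    (hq : ∀ n ∈ q, ∀ m, f m n = 0) : M ⧸ p →ₗ[R] N ⧸ q →ₗ[R] P :=
  (q.liftQ (p.liftQ f fun m hm => LinearMap.ext (hp m hm)).flip fun n hn =>
    p.linearMap_qext (LinearMap.ext fun m => hq n hn m)).flip

@[simp]
theorem liftQ₂_mk (f : M →ₗ[R] N →ₗ[R] P) (hp : ∀ m ∈ p, ∀ n, f m n = 0)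
    (hq : ∀ n ∈ q, ∀ m, f m n = 0) (m : M) (n : N) :
    p.liftQ₂ q f hp hq (Quotient.mk m) (Quotient.mk n) = f m n :=
  rfl

theorem continuous_liftQ₂_uncurry [TopologicalSpace M] [TopologicalSpace N] [TopologicalSpace P]
    [ContinuousAdd M] [ContinuousAdd N] (f : M →ₗ[R] N →ₗ[R] P)
    (hp : ∀ m ∈ p, ∀ n, f m n = 0) (hq : ∀ n ∈ q, ∀ m, f m n = 0)
    (hf : Continuous fun x : M × N => f x.1 x.2) :
    Continuous fun x : (M ⧸ p) × (N ⧸ q) => p.liftQ₂ q f hp hq x.1 x.2 :=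
  (p.isOpenQuotientMap_mkQ.prodMap q.isOpenQuotientMap_mkQ).continuous_comp_iff.1 hf

end Submodule

section Annihilator

variable (I : X₀ →L[ℝ] X₁ →L[ℝ] ℝ)

theorem mem_annLeft {B : Set X₁} {x : X₀} : x ∈ annLeft I B ↔ ∀ y ∈ B, I x y = 0 :=
  Iff.rfl

theorem annRight_eq_annLeft_flip (B : Set X₀) : annRight I B = annLeft I.flip B :=
  rfl

theorem isClosed_annLeft (B : Set X₁) : IsClosed (annLeft I B : Set X₀) := by
  have h : (annLeft I B : Set X₀) = ⋂ y ∈ B, {x | I.flip y x = 0} := by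
    ext x
    simp [mem_annLeft]
  rw [h]
  exact isClosed_biInter fun y _ => isClosed_eq (I.flip y).continuous continuous_const

theorem closure_eq_annLeft_annRight (hI : Function.Surjective I.flip) (B : Submodule ℝ X₀) :
    closure (B : Set X₀) = annLeft I (annRight I B) := by
  refine subset_antisymm
    (closure_minimal (fun x hx y hy => hy x hx) (isClosed_annLeft I _)) fun x hx => ?_
  by_contra hxB
  obtain ⟨f, hfB, hfx⟩ := B.exists_dual_map_eq_zero_ne_zero_of_notMem_closure hxB
  obtain ⟨y, rfl⟩ := hI f
  exact hfx (hx y hfB)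

theorem closure_eq_annRight_annLeft (hI : Function.Surjective I) (B : Submodule ℝ X₁) :
    closure (B : Set X₁) = annRight I (annLeft I B) := by
  rw [annRight_eq_annLeft_flip]
  exact closure_eq_annLeft_annRight I.flip (by rwa [I.flip_flip]) B

end Annihilator

theorem quotient_pairing_duality_general
    (I : X₀ →L[ℝ] X₁ →L[ℝ] ℝ)
    (hsurj₁ : Function.Surjective (⇑I.flip : X₁ → (X₀ →L[ℝ] ℝ)))
    (hsurj₀ : Function.Surjective (⇑I : X₀ → (X₁ →L[ℝ] ℝ)))
    (B₀ : Submodule ℝ X₀) (B₁ : Submodule ℝ X₁)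
    (A₀ : Submodule ℝ X₀) (A₁ : Submodule ℝ X₁)
    (hA₀ : A₀ = annLeft I (B₁ : Set X₁)) (hA₁ : A₁ = annRight I (B₀ : Set X₀))
    (hB₀ : B₀ ≤ A₀) (hB₁ : B₁ ≤ A₁) :
    ∃ Ibar : (A₀ ⧸ (B₀.comap A₀.subtype).topologicalClosure) →ₗ[ℝ]
        (A₁ ⧸ (B₁.comap A₁.subtype).topologicalClosure) →ₗ[ℝ] ℝ,
      (∀ (a : A₀) (α : A₁),
        Ibar (Submodule.Quotient.mk a) (Submodule.Quotient.mk α) = I (a : X₀) (α : X₁)) ∧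
      Continuous (fun p : (A₀ ⧸ (B₀.comap A₀.subtype).topologicalClosure) ×
          (A₁ ⧸ (B₁.comap A₁.subtype).topologicalClosure) => Ibar p.1 p.2) ∧
      (∀ a : A₀, (Submodule.Quotient.mk a : A₀ ⧸ (B₀.comap A₀.subtype).topologicalClosure) ≠ 0 →
        ∃ α : A₁, Ibar (Submodule.Quotient.mk a) (Submodule.Quotient.mk α) ≠ 0) ∧
      (∀ α : A₁, (Submodule.Quotient.mk α : A₁ ⧸ (B₁.comap A₁.subtype).topologicalClosure) ≠ 0 →
        ∃ a : A₀, Ibar (Submodule.Quotient.mk a) (Submodule.Quotient.mk α) ≠ 0) := by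
  have hmem₀ (a : A₀) : a ∈ (B₀.comap A₀.subtype).topologicalClosure ↔
      ∀ α : A₁, I a α = 0 := by
    rw [Submodule.mem_topologicalClosure_comap_subtype_iff hB₀,
      closure_eq_annLeft_annRight I hsurj₁, ← hA₁]
    exact ⟨fun h α => h α α.2, fun h y hy => h ⟨y, hy⟩⟩
  have hmem₁ (α : A₁) : α ∈ (B₁.comap A₁.subtype).topologicalClosure ↔
      ∀ a : A₀, I a α = 0 := by
    rw [Submodule.mem_topologicalClosure_comap_subtype_iff hB₁,
      closure_eq_annRight_annLeft I hsurj₀, ← hA₀]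
    exact ⟨fun h a => h a a.2, fun h x hx => h ⟨x, hx⟩⟩
  let J : A₀ →ₗ[ℝ] A₁ →ₗ[ℝ] ℝ := I.toLinearMap₁₂.compl₁₂ A₀.subtype A₁.subtype
  refine ⟨Submodule.liftQ₂ _ _ J (fun a ha => (hmem₀ a).1 ha) (fun α hα => (hmem₁ α).1 hα),
    Submodule.liftQ₂_mk _ _ J _ _, Submodule.continuous_liftQ₂_uncurry _ _ J _ _ ?_,
    fun a ha => ?_, fun α hα => ?_⟩
  · exact I.continuous₂.comp (continuous_subtype_val.prodMap continuous_subtype_val)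
  · rwa [Ne, Submodule.Quotient.mk_eq_zero, hmem₀, not_forall] at ha
  · rwa [Ne, Submodule.Quotient.mk_eq_zero, hmem₁, not_forall] at hα

/-- Let `X₀`, `X₁` be real Banach spaces and `I : X₀ × X₁ → ℝ` a continuous
bilinear map such that both induced maps `X₁ → X₀*` and `X₀ → X₁*` are surjective.  Let
`B₀ ⊆ X₀`, `B₁ ⊆ X₁` be linear subspaces, `A₀ := B₁^⊥`, `A₁ := B₀^⊥`, and assume `B₀ ⊆ A₀`
and `B₁ ⊆ A₁`.  Then the induced pairing `Ī : (A₀ / closure B₀) × (A₁ / closure B₁) → ℝ`,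
`Ī([a],[α]) = I(a,α)`, is well defined, continuous, and nondegenerate. -/
theorem quotient_pairing_duality
    [CompleteSpace X₀] [CompleteSpace X₁]
    (I : X₀ →L[ℝ] X₁ →L[ℝ] ℝ)
    (hsurj₁ : Function.Surjective (⇑I.flip : X₁ → (X₀ →L[ℝ] ℝ)))
    (hsurj₀ : Function.Surjective (⇑I : X₀ → (X₁ →L[ℝ] ℝ)))
    (B₀ : Submodule ℝ X₀) (B₁ : Submodule ℝ X₁)
    (A₀ : Submodule ℝ X₀) (A₁ : Submodule ℝ X₁)
    (hA₀ : A₀ = annLeft I (B₁ : Set X₁)) (hA₁ : A₁ = annRight I (B₀ : Set X₀))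
    (hB₀ : B₀ ≤ A₀) (hB₁ : B₁ ≤ A₁) :
    ∃ Ibar : (A₀ ⧸ (B₀.comap A₀.subtype).topologicalClosure) →ₗ[ℝ]
        (A₁ ⧸ (B₁.comap A₁.subtype).topologicalClosure) →ₗ[ℝ] ℝ,
      (∀ (a : A₀) (α : A₁),
        Ibar (Submodule.Quotient.mk a) (Submodule.Quotient.mk α) = I (a : X₀) (α : X₁)) ∧
      Continuous (fun p : (A₀ ⧸ (B₀.comap A₀.subtype).topologicalClosure) ×
          (A₁ ⧸ (B₁.comap A₁.subtype).topologicalClosure) => Ibar p.1 p.2) ∧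
      (∀ a : A₀, (Submodule.Quotient.mk a : A₀ ⧸ (B₀.comap A₀.subtype).topologicalClosure) ≠ 0 →
        ∃ α : A₁, Ibar (Submodule.Quotient.mk a) (Submodule.Quotient.mk α) ≠ 0) ∧
      (∀ α : A₁, (Submodule.Quotient.mk α : A₁ ⧸ (B₁.comap A₁.subtype).topologicalClosure) ≠ 0 →
        ∃ a : A₀, Ibar (Submodule.Quotient.mk a) (Submodule.Quotient.mk α) ≠ 0) :=
  quotient_pairing_duality_general I hsurj₁ hsurj₀ B₀ B₁ A₀ A₁ hA₀ hA₁ hB₀ hB₁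

end
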